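/- Let G be a finite simple graph on vertex set [n] and let h, k be integers with 1 ≤ h ≤ k ≤ n/2. Let B be the (n;k,h)-binomial matrix, and let L_h and L_k be the Laplacian matrices of F_h(G) and F_k(G). If w is an eigenvector of L_k with eigenvalue λ and Bᵀw ≠ 0, then Bᵀw is an eigenvector of L_h with eigenvalue λ. -/

import Mathlib

open Finset Matrix
open scoped symmDiff

/-- The `k`-token graph of a graph `G`: vertices are the `k`-subsets of the vertex set,
two subsets `A`, `B` being adjacent iff their symmetric difference is a pair `{a, b}`
with `a ∈ A`, `b ∈ B` and `a` adjacent to `b` in `G`. -/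
def tokenGraph {V : Type*} [DecidableEq V] (G : SimpleGraph V) (k : ℕ) :
    SimpleGraph {s : Finset V // s.card = k} where
  Adj A B := ∃ a b, a ∈ A.1 ∧ b ∈ B.1 ∧ G.Adj a b ∧ A.1 ∆ B.1 = {a, b}
  symm := by
    constructor
    rintro A B ⟨a, b, ha, hb, hab, hd⟩
    exact ⟨b, a, hb, ha, hab.symm, by rw [symmDiff_comm, hd, Finset.pair_comm]⟩
  loopless := by
    constructor
    rintro A ⟨a, b, ha, hb, hab, hd⟩
    rw [symmDiff_self] at hd
    exact Finset.insert_ne_empty a {b} hd.symm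

/-- The Laplacian matrix (over `ℝ`) of a finite simple graph: `L = D - A`. -/
noncomputable def Lap {V : Type*} [Fintype V] [DecidableEq V] (G : SimpleGraph V) :
    Matrix V V ℝ :=
  letI := Classical.decRel G.Adj
  G.lapMatrix ℝ

/-- The `(n;k₂,k₁)`-binomial matrix: rows indexed by the `k₂`-subsets, columns by the
`k₁`-subsets of `Fin n`; entry is `1` iff the column subset is contained in the row subset. -/
def binMatrix2 (n k₂ k₁ : ℕ) :
    Matrix {s : Finset (Fin n) // s.card = k₂} {s : Finset (Fin n) // s.card = k₁} ℝ :=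
  Matrix.of fun A X => if X.1 ⊆ A.1 then 1 else 0

/-! The Laplacian of `F_k(G)` is `∑_{ab ∈ E(G)} (1 - P_{(a b)})`, where `P_σ` is the permutation
matrix of `σ` acting on `k`-subsets. Inclusion `X ⊆ A` is invariant under permutations, so `Bᵀ`
intertwines these permutation matrices; hence `L_h Bᵀ = Bᵀ L_k`, and `Bᵀ` sends a `λ`-eigenvector
of `L_k` to a solution of `L_h v = λ v`. -/

open Equiv

namespace Finset

variable {α : Type*} [DecidableEq α] {s : Finset α} {a b : α}

lemma map_swap_eq_self (h : a ∈ s ↔ b ∈ s) : s.map (swap a b).toEmbedding = s := by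
  ext x
  rw [mem_map_equiv, symm_swap, swap_apply_def]
  split_ifs with hxa hxb <;> subst_vars <;> tauto

lemma symmDiff_map_swap (h : ¬(a ∈ s ↔ b ∈ s)) : s ∆ s.map (swap a b).toEmbedding = {a, b} := by
  ext x
  rw [mem_symmDiff, mem_map_equiv, symm_swap, swap_apply_def, mem_insert, mem_singleton]
  split_ifs with hxa hxb <;> subst_vars <;> tauto

end Finset

section tokenPerm

variable {V : Type*}

def tokenPerm (σ : Perm V) (k : ℕ) : Perm {s : Finset V // s.card = k} :=
  σ.finsetCongr.subtypeEquiv fun s => by simp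

@[simp]
lemma coe_tokenPerm_apply (σ : Perm V) {k : ℕ} (A : {s : Finset V // s.card = k}) :
    (tokenPerm σ k A : Finset V) = A.1.map σ.toEmbedding :=
  rfl

variable [DecidableEq V]

def edgeSwap : Sym2 V → Perm V :=
  Sym2.lift ⟨swap, swap_comm⟩

@[simp]
lemma edgeSwap_mk (a b : V) : edgeSwap s(a, b) = swap a b :=
  rfl

lemma mem_iff_mem_symmDiff_of_tokenPerm_edgeSwap_ne {k : ℕ} {A : {s : Finset V // s.card = k}}
    {e : Sym2 V} (h : tokenPerm (edgeSwap e) k A ≠ A) (x : V) :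
    x ∈ e ↔ x ∈ A.1 ∆ (tokenPerm (edgeSwap e) k A).1 := by
  induction e using Sym2.ind with
  | h a b =>
    have hab : ¬(a ∈ A.1 ↔ b ∈ A.1) := fun hab => h (Subtype.ext (Finset.map_swap_eq_self hab))
    rw [coe_tokenPerm_apply, edgeSwap_mk, Finset.symmDiff_map_swap hab, Sym2.mem_iff,
      Finset.mem_insert, Finset.mem_singleton]

lemma tokenGraph_adj_iff (G : SimpleGraph V) {k : ℕ} {A B : {s : Finset V // s.card = k}} :
    (tokenGraph G k).Adj A B ↔ A ≠ B ∧ ∃ e ∈ G.edgeSet, tokenPerm (edgeSwap e) k A = B := by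
  constructor
  · rintro ⟨a, b, ha, hb, hab, hd⟩
    have hbA : b ∉ A.1 := by
      have hbd : b ∈ A.1 ∆ B.1 := hd ▸ Finset.mem_insert_of_mem (Finset.mem_singleton_self b)
      rw [Finset.mem_symmDiff] at hbd
      tauto
    have hswap : A.1 ∆ (A.1.map (swap a b).toEmbedding) = {a, b} :=
      Finset.symmDiff_map_swap (by tauto)
    refine ⟨fun h => ?_, s(a, b), hab, Subtype.ext ?_⟩
    · subst h
      exact Finset.insert_ne_empty _ _ (symmDiff_self A.1 ▸ hd).symm
    · rw [coe_tokenPerm_apply, edgeSwap_mk, ← symmDiff_symmDiff_cancel_left A.1 B.1, hd, ← hswap,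
        symmDiff_symmDiff_cancel_left]
  · rintro ⟨hne, e, he, rfl⟩
    induction e using Sym2.ind with
    | h a b =>
      have hab : ¬(a ∈ A.1 ↔ b ∈ A.1) := fun hab =>
        hne (Subtype.ext (Finset.map_swap_eq_self hab)).symm
      have hd : A.1 ∆ (tokenPerm (edgeSwap s(a, b)) k A).1 = {a, b} :=
        Finset.symmDiff_map_swap hab
      by_cases ha : a ∈ A.1
      · refine ⟨a, b, ha, ?_, he, hd⟩
        simp [Finset.mem_map_equiv, ha]
      · have hb : b ∈ A.1 := by tauto
        refine ⟨b, a, hb, ?_, G.adj_symm he, by rw [hd, Finset.pair_comm]⟩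
        simp [Finset.mem_map_equiv, hb]

lemma card_filter_tokenPerm_edgeSwap_eq [Fintype V] (G : SimpleGraph V) [DecidableRel G.Adj]
    {k : ℕ} [DecidableRel (tokenGraph G k).Adj] {A B : {s : Finset V // s.card = k}}
    (hAB : A ≠ B) :
    #{e ∈ G.edgeFinset | tokenPerm (edgeSwap e) k A = B} =
      if (tokenGraph G k).Adj A B then 1 else 0 := by
  split_ifs with hadj
  · obtain ⟨-, e, he, rfl⟩ := (tokenGraph_adj_iff G).mp hadj
    refine Finset.card_eq_one.mpr ⟨e, Finset.eq_singleton_iff_unique_mem.mpr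
      ⟨by simpa using he, fun f hf => Sym2.ext fun x => ?_⟩⟩
    rw [Finset.mem_filter] at hf
    rw [mem_iff_mem_symmDiff_of_tokenPerm_edgeSwap_ne (hf.2 ▸ hAB.symm),
      mem_iff_mem_symmDiff_of_tokenPerm_edgeSwap_ne hAB.symm, hf.2]
  · refine Finset.card_eq_zero.mpr (Finset.filter_eq_empty_iff.mpr fun e he heB => hadj ?_)
    exact (tokenGraph_adj_iff G).mpr ⟨hAB, e, by simpa using he, heB⟩

end tokenPerm

lemma Matrix.eq_of_mulVec_one_eq_zero_of_offDiag_eq {ι R : Type*} [Fintype ι] [DecidableEq ι]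
    [NonAssocRing R] {M N : Matrix ι ι R} (hM : M *ᵥ (fun _ => 1) = 0)
    (hN : N *ᵥ (fun _ => 1) = 0) (h : ∀ i j, i ≠ j → M i j = N i j) : M = N := by
  ext i j
  rcases eq_or_ne i j with rfl | hij
  · have hrow : ∀ P : Matrix ι ι R, P *ᵥ (fun _ => 1) = 0 →
        P i i = -∑ j ∈ Finset.univ.erase i, P i j := fun P hP => by
      rw [eq_neg_iff_add_eq_zero, Finset.add_sum_erase _ _ (Finset.mem_univ i)]
      simpa [mulVec, dotProduct] using congrFun hP i
    rw [hrow M hM, hrow N hN,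
      Finset.sum_congr rfl fun j hj => h i j (Finset.ne_of_mem_erase hj).symm]
  · exact h i j hij

lemma lap_tokenGraph_eq_sum {V : Type*} [Fintype V] [DecidableEq V] (G : SimpleGraph V)
    [DecidableRel G.Adj] (k : ℕ) :
    Lap (tokenGraph G k) = ∑ e ∈ G.edgeFinset, (1 - (tokenPerm (edgeSwap e) k).permMatrix ℝ) := by
  classical
  refine Matrix.eq_of_mulVec_one_eq_zero_of_offDiag_eq
    (SimpleGraph.lapMatrix_mulVec_const_eq_zero _) ?_ fun A B hAB => ?_
  · rw [Matrix.sum_mulVec]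
    refine Finset.sum_eq_zero fun e _ => ?_
    rw [sub_mulVec, one_mulVec, permMatrix_mulVec]
    exact sub_self _
  · rw [Lap, SimpleGraph.lapMatrix, Matrix.sub_apply, SimpleGraph.degMatrix,
      diagonal_apply_ne _ hAB, SimpleGraph.adjMatrix_apply, Matrix.sum_apply]
    simp only [Matrix.sub_apply, one_apply_ne hAB, zero_sub, Finset.sum_neg_distrib,
      Perm.permMatrix, PEquiv.toMatrix_toPEquiv_apply, Pi.single_apply, eq_comm (a := B),
      Finset.sum_boole, card_filter_tokenPerm_edgeSwap_eq G hAB, Nat.cast_ite, Nat.cast_one,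
      Nat.cast_zero]

lemma permMatrix_tokenPerm_mul_binMatrix2_transpose {n : ℕ} (σ : Perm (Fin n)) (h k : ℕ) :
    (tokenPerm σ h).permMatrix ℝ * (binMatrix2 n k h)ᵀ =
      (binMatrix2 n k h)ᵀ * (tokenPerm σ k).permMatrix ℝ := by
  rw [Perm.permMatrix, Perm.permMatrix, PEquiv.toMatrix_toPEquiv_mul,
    PEquiv.mul_toMatrix_toPEquiv]
  ext X A
  have hsub : (tokenPerm σ h X).1 ⊆ A.1 ↔ X.1 ⊆ ((tokenPerm σ k).symm A).1 := by
    conv_lhs => rw [← (tokenPerm σ k).apply_symm_apply A]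
    exact Finset.map_subset_map
  simp only [submatrix_apply, transpose_apply, binMatrix2, of_apply, id, hsub]

lemma lap_tokenGraph_mul_binMatrix2_transpose {n : ℕ} (G : SimpleGraph (Fin n)) (h k : ℕ) :
    Lap (tokenGraph G h) * (binMatrix2 n k h)ᵀ = (binMatrix2 n k h)ᵀ * Lap (tokenGraph G k) := by
  classical
  simp only [lap_tokenGraph_eq_sum, Matrix.sum_mul, Matrix.mul_sum, Matrix.sub_mul, Matrix.mul_sub,
    Matrix.one_mul, Matrix.mul_one, permMatrix_tokenPerm_mul_binMatrix2_transpose]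

theorem binMatrix2_transpose_eigenvector_general (n h k : ℕ) (G : SimpleGraph (Fin n)) (lam : ℝ)
    (w : {s : Finset (Fin n) // s.card = k} → ℝ)
    (hev : Lap (tokenGraph G k) *ᵥ w = lam • w) :
    Lap (tokenGraph G h) *ᵥ ((binMatrix2 n k h)ᵀ *ᵥ w) =
      lam • ((binMatrix2 n k h)ᵀ *ᵥ w) := by
  rw [mulVec_mulVec, lap_tokenGraph_mul_binMatrix2_transpose, ← mulVec_mulVec, hev, mulVec_smul]

/-- For `1 ≤ h ≤ k ≤ n/2` and `B` the `(n;k,h)`-binomial matrix: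
if `w` is an eigenvector of `L_k` with eigenvalue `λ` and `Bᵀ w ≠ 0`, then `Bᵀ w` is an
eigenvector of `L_h` with eigenvalue `λ`. -/
theorem binMatrix2_transpose_eigenvector (n h k : ℕ)
    (hh : 1 ≤ h) (hhk : h ≤ k) (hkn : 2 * k ≤ n) (G : SimpleGraph (Fin n)) (lam : ℝ)
    (w : {s : Finset (Fin n) // s.card = k} → ℝ) (hw : w ≠ 0)
    (hev : Lap (tokenGraph G k) *ᵥ w = lam • w)
    (hBw : (binMatrix2 n k h)ᵀ *ᵥ w ≠ 0) :
    Lap (tokenGraph G h) *ᵥ ((binMatrix2 n k h)ᵀ *ᵥ w) =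
      lam • ((binMatrix2 n k h)ᵀ *ᵥ w) :=
  binMatrix2_transpose_eigenvector_general n h k G lam w hev
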